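/- Suppose α and ν satisfy conditions (⋆). Then there exists δ₀ > 0 such that for every 0 < δ < δ₀ and every (t,s) ∈ S¹×S¹, α(s) − α_δ(t) ∉ ν_t^⊥, where α_δ(t) = α(t) + δ α^{(k)}(t). -/

import Mathlib

noncomputable section
open scoped RealInnerProductSpace BigOperators
open Real

/-- `Euc n` is Euclidean `n`-space. -/
abbrev Euc (n : ℕ) := EuclideanSpace ℝ (Fin n)

/-- Determinant of three (row) vectors in `ℝ³`. -/
def det3 (u v w : Euc 3) : ℝ :=
  Matrix.det (Matrix.of ![fun i => u i, fun i => v i, fun i => w i])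

/-- Cross product in `ℝ³`. -/
def cross3 (u v : Euc 3) : Euc 3 :=
  WithLp.toLp 2 ![u 1 * v 2 - u 2 * v 1, u 2 * v 0 - u 0 * v 2, u 0 * v 1 - u 1 * v 0]

/-- Normalization of a vector of `ℝ³`. -/
def unit3 (v : Euc 3) : Euc 3 := ‖v‖⁻¹ • v

/-- The coordinate map `c_t : ℝⁿ → ℝ³`, `c_t(x) = (⟨x,p₁(t)⟩,⟨x,p₂(t)⟩,⟨x,p₃(t)⟩)`,
associated with a moving frame `p`. -/
def cmap {n : ℕ} (p : Fin 3 → ℝ → Euc n) (t : ℝ) (x : Euc n) : Euc 3 :=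
  WithLp.toLp 2 ![⟪x, p 0 t⟫, ⟪x, p 1 t⟫, ⟪x, p 2 t⟫]

/-- The linear map `A_t(x) = Σᵢ ⟨x, o_t(pᵢ'(t))⟩ pᵢ(t)`, where `o_t = id - P t` is the
orthogonal projection onto `ν_t^⊥`. -/
def Amap {n : ℕ} (P : ℝ → Euc n →L[ℝ] Euc n) (p : Fin 3 → ℝ → Euc n) (t : ℝ)
    (x : Euc n) : Euc n :=
  ∑ i : Fin 3, ⟪x, deriv (p i) t - P t (deriv (p i) t)⟫ • p i t

/-- The Gauss map `e₁(t,s) = c_t(β(s)-α(t))/‖c_t(β(s)-α(t))‖`. -/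
def gauss {n : ℕ} (p : Fin 3 → ℝ → Euc n) (α β : ℝ → Euc n) (t s : ℝ) : Euc 3 :=
  unit3 (cmap p t (β s - α t))

/-- The density (coefficient of `dt ∧ ds`) of the pullback `e₁*Ω₂` of the standard
volume form of `S²` under the Gauss map `e₁`. -/
def linkDens {n : ℕ} (p : Fin 3 → ℝ → Euc n) (α β : ℝ → Euc n) (t s : ℝ) : ℝ :=
  det3 (gauss p α β t s) (deriv (fun t' => gauss p α β t' s) t)
    (deriv (fun s' => gauss p α β t s') s)

/-- The linking number `L_ν(α,β) = (1/4π) ∫_{S¹×S¹} e₁*Ω₂` of the closed curves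
`α, β` with respect to the bundle `ν` (encoded by a parallel frame `p`). -/
def Lnu {n : ℕ} (ℓ : ℝ) (p : Fin 3 → ℝ → Euc n) (α β : ℝ → Euc n) : ℝ :=
  (4 * π)⁻¹ * ∫ t in (0:ℝ)..ℓ, ∫ s in (0:ℝ)..ℓ, linkDens p α β t s

/-- `P` encodes a smooth `3`-dimensional vector subbundle `ν` of the trivial bundle
`S¹ × ℝⁿ → S¹` (where `S¹ = ℝ/ℓℤ`): `P t` is the orthogonal projection of `ℝⁿ` onto the
fiber `ν_t`; thus `ν_t = range (P t)` and `x ∈ ν_t^⊥ ↔ P t x = 0`. -/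
def IsOrthProjFamily {n : ℕ} (ℓ : ℝ) (P : ℝ → Euc n →L[ℝ] Euc n) : Prop :=
  ContDiff ℝ (⊤ : ℕ∞) (fun t => P t) ∧ (∀ t, P (t + ℓ) = P t) ∧
  (∀ t x y, ⟪P t x, y⟫ = ⟪x, P t y⟫) ∧ (∀ t x, P t (P t x) = P t x) ∧
  (∀ t, Module.finrank ℝ (LinearMap.range (P t).toLinearMap) = 3)

/-- `p` is a smooth parallel orthonormal frame of the bundle encoded by `P`. -/
def IsParallelFrame {n : ℕ} (P : ℝ → Euc n →L[ℝ] Euc n) (p : Fin 3 → ℝ → Euc n) : Prop :=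
  (∀ i, ContDiff ℝ (⊤ : ℕ∞) (p i)) ∧
  (∀ t i j, ⟪p i t, p j t⟫ = if i = j then 1 else 0) ∧
  (∀ t i, P t (p i t) = p i t) ∧
  (∀ t i, P t (deriv (p i) t) = 0)

/-- `α` is a smooth closed curve of period `ℓ` in `ℝⁿ`. -/
def IsClosedCurve {n : ℕ} (ℓ : ℝ) (α : ℝ → Euc n) : Prop :=
  ContDiff ℝ (⊤ : ℕ∞) α ∧ ∀ t, α (t + ℓ) = α t

/-- `s` and `t` represent the same point of `S¹ = ℝ/ℓℤ`. -/
def SamePt (ℓ t s : ℝ) : Prop := ∃ m : ℤ, s - t = m * ℓ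

/-- Conditions (⋆) of Lemma 3.1 on a smooth closed curve `α` and the bundle encoded by
`P` (recall `x ∈ ν_t^⊥ ↔ P t x = 0`): (1) `α(s) - α(t) ∉ ν_t^⊥` for `s ≠ t` in `S¹`;
(2) `1 ≤ k ≤ n-2` and for all `t`: (a) `α'(t), …, α^{(k+1)}(t)` are linearly
independent; (b) `α'(t), …, α^{(k-1)}(t) ∈ ν_t^⊥`; (c) the sum
`⟨α^{(k)}(t)⟩ + ⟨α^{(k+1)}(t)⟩ + ν_t^⊥` is direct. -/
def StarCond {n : ℕ} (ℓ : ℝ) (P : ℝ → Euc n →L[ℝ] Euc n) (α : ℝ → Euc n) (k : ℕ) : Prop :=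
  (∀ t s, ¬ SamePt ℓ t s → P t (α s - α t) ≠ 0) ∧
  1 ≤ k ∧ k ≤ n - 2 ∧
  (∀ t, LinearIndependent ℝ (fun j : Fin (k + 1) => iteratedDeriv ((j : ℕ) + 1) α t)) ∧
  (∀ t j, 1 ≤ j → j ≤ k - 1 → P t (iteratedDeriv j α t) = 0) ∧
  (∀ t (c₁ c₂ : ℝ) (v : Euc n), P t v = 0 →
    c₁ • iteratedDeriv k α t + c₂ • iteratedDeriv (k + 1) α t + v = 0 →
    c₁ = 0 ∧ c₂ = 0 ∧ v = 0)

open scoped ContDiff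
open Finset in
private lemma hasDerivAt_taylor_sum' {E : Type*} [NormedAddCommGroup E] [NormedSpace ℝ E]
    (c : ℕ → E) (r : ℕ) (x : ℝ) :
    HasDerivAt (fun y : ℝ => ∑ j ∈ range (r+1), ((y^j / (j.factorial : ℝ)) • c j))
      (∑ j ∈ range r, ((x^j / (j.factorial : ℝ)) • c (j+1))) x := by
  have h : HasDerivAt (fun y : ℝ => ∑ j ∈ range (r+1), ((y^j / (j.factorial : ℝ)) • c j))
      (∑ j ∈ range (r+1), (((j : ℝ) * x^(j-1) / (j.factorial : ℝ)) • c j)) x := by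
    apply HasDerivAt.fun_sum
    intro j _
    exact (((hasDerivAt_pow j x).div_const _).smul_const (c j))
  convert h using 1
  rw [Finset.sum_range_succ']
  simp only [Nat.cast_zero, zero_mul, zero_div, zero_smul, add_zero]
  apply Finset.sum_congr rfl
  intro i _
  congr 1
  have : ((i+1 : ℕ) : ℝ) ≠ 0 := by positivity
  rw [Nat.add_sub_cancel]
  field_simp [Nat.factorial_succ]
  rw [Nat.factorial_succ]; push_cast; ring

private lemma taylor_bound_aux {E : Type*} [NormedAddCommGroup E] [NormedSpace ℝ E]
    (r : ℕ) : ∀ (f : ℝ → E), ContDiff ℝ ∞ f → ∀ {C : ℝ},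
    (∀ y, ‖iteratedDeriv r f y‖ ≤ C) → ∀ t h : ℝ,
    ‖f (t+h) - ∑ j ∈ Finset.range r, ((h^j / (j.factorial : ℝ)) • iteratedDeriv j f t)‖
      ≤ C * |h|^r := by
  induction r with
  | zero =>
      intro f hf C hC t h
      simpa using hC (t+h)
  | succ r IH =>
      intro f hf C hC t h
      have hC0 : 0 ≤ C := le_trans (norm_nonneg _) (hC 0)
      have hf' : ContDiff ℝ ∞ (deriv f) := (contDiff_infty_iff_deriv.mp hf).2
      have hC' : ∀ y, ‖iteratedDeriv r (deriv f) y‖ ≤ C := by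
        intro y; rw [← iteratedDeriv_succ']; exact hC y
      set g : ℝ → E := fun y =>
        f (t+y) - ∑ j ∈ Finset.range (r+1), ((y^j / (j.factorial : ℝ)) • iteratedDeriv j f t)
        with hg
      have hgd : ∀ x : ℝ, HasDerivAt g
          (deriv f (t+x) - ∑ j ∈ Finset.range r,
            ((x^j / (j.factorial : ℝ)) • iteratedDeriv j (deriv f) t)) x := by
        intro x
        have h1 : HasDerivAt (fun y : ℝ => f (t+y)) (deriv f (t+x)) x := by
          exact HasDerivAt.comp_const_add t x
            ((hf.differentiable (by norm_num)).differentiableAt (x := t + x)).hasDerivAt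
        have h2 := hasDerivAt_taylor_sum' (fun j => iteratedDeriv j f t) r x
        have := h1.sub h2
        convert this using 2
        · rfl
        apply Finset.sum_congr rfl
        intro j _
        rw [← iteratedDeriv_succ']
      have hbound : ∀ x ∈ Set.uIcc (0:ℝ) h,
          ‖deriv f (t+x) - ∑ j ∈ Finset.range r,
            ((x^j / (j.factorial : ℝ)) • iteratedDeriv j (deriv f) t)‖ ≤ C * |h|^r := by
        intro x hx
        refine le_trans (IH (deriv f) hf' hC' t x) ?_
        have hxh : |x| ≤ |h| := by
          rcases Set.mem_uIcc.mp hx with ⟨h1, h2⟩ | ⟨h1, h2⟩ <;> rw [abs_le] <;>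
            constructor <;> [skip; skip; skip; skip] <;> cases abs_cases h <;> nlinarith
        exact mul_le_mul_of_nonneg_left (pow_le_pow_left₀ (abs_nonneg x) hxh r) hC0
      have hmvt := Convex.norm_image_sub_le_of_norm_hasDerivWithin_le
        (f := g) (s := Set.uIcc (0:ℝ) h)
        (fun x _ => (hgd x).hasDerivWithinAt) hbound (convex_uIcc _ _)
        Set.left_mem_uIcc Set.right_mem_uIcc
      have hg0 : g 0 = 0 := by
        rw [hg]
        simp only [add_zero]
        rw [Finset.sum_range_succ']
        simp [zero_pow, Nat.factorial]
      rw [hg0, sub_zero] at hmvt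
      calc ‖g h‖ ≤ C * |h|^r * ‖h - 0‖ := hmvt
        _ = C * |h|^(r+1) := by rw [sub_zero, Real.norm_eq_abs, pow_succ]; ring
set_option maxHeartbeats 1000000 in
/-- If `α` and `ν` satisfy conditions (⋆), then there exists `δ₀ > 0` such
that for every `0 < δ < δ₀` and every `(t,s) ∈ S¹ × S¹`,
`α(s) - α_δ(t) ∉ ν_t^⊥`, where `α_δ(t) = α(t) + δ α^{(k)}(t)`. -/
theorem pushed_curve_avoids_normal_spaces
    (n : ℕ) (hn : 3 ≤ n) (ℓ : ℝ) (hℓ : 0 < ℓ)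
    (P : ℝ → Euc n →L[ℝ] Euc n) (hP : IsOrthProjFamily ℓ P)
    (α : ℝ → Euc n) (hα : IsClosedCurve ℓ α)
    (k : ℕ) (hstar : StarCond ℓ P α k) :
    ∃ δ₀ > (0:ℝ), ∀ δ : ℝ, 0 < δ → δ < δ₀ →
      ∀ t s, P t (α s - (α t + δ • iteratedDeriv k α t)) ≠ 0 := by
  obtain ⟨hPs, hPper, hPsym, hPidem, -⟩ := hP
  obtain ⟨hαs, hαper⟩ := hα
  obtain ⟨hsep, hk1, -, -, hb, hc⟩ := hstar
  have hαsm : ContDiff ℝ ∞ α := hαs.of_le (by simp)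
  have hαcont : Continuous α := hαsm.continuous
  have hDcont : ∀ j, Continuous (iteratedDeriv j α) := by
    intro j; rw [iteratedDeriv_eq_iterate]; exact (hαsm.iterate_deriv j).continuous
  have hDper : ∀ j, Function.Periodic (iteratedDeriv j α) ℓ := by
    intro j
    induction j with
    | zero => intro x; simpa [iteratedDeriv_zero] using hαper x
    | succ j ih =>
        intro x
        have hfun : (fun y => iteratedDeriv j α (y + ℓ)) = iteratedDeriv j α := funext ih
        simp only [iteratedDeriv_succ]
        calc deriv (iteratedDeriv j α) (x + ℓ)
            = deriv (fun y => iteratedDeriv j α (y + ℓ)) x := (deriv_comp_add_const _ _ _).symm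
          _ = deriv (iteratedDeriv j α) x := by rw [hfun]
  have hPcont : Continuous fun t => P t := hPs.continuous
  have hPperF : Function.Periodic (fun t => P t) ℓ := hPper
  have hPZ : ∀ (q : ℤ) (t : ℝ), P (t - q * ℓ) = P t := fun q t => hPperF.sub_int_mul_eq q
  have hαZ : ∀ (q : ℤ) (t : ℝ), α (t - q * ℓ) = α t := fun q t =>
    Function.Periodic.sub_int_mul_eq hαper q
  have hDZ : ∀ (j : ℕ) (q : ℤ) (t : ℝ),
      iteratedDeriv j α (t - q * ℓ) = iteratedDeriv j α t := fun j q t =>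
    (hDper j).sub_int_mul_eq q
  have hrep : ∀ t : ℝ, ∃ q : ℤ, t - q * ℓ ∈ Set.Icc (0:ℝ) ℓ := fun t =>
    ⟨⌊t/ℓ⌋, ⟨Int.sub_floor_div_mul_nonneg t hℓ, (Int.sub_floor_div_mul_lt t hℓ).le⟩⟩
  have hPle : ∀ (t : ℝ) (x : Euc n), ‖P t x‖ ≤ ‖x‖ := by
    intro t x
    have h1 : ⟪P t x, P t x⟫ = ⟪x, P t x⟫ := by
      rw [hPsym t x (P t x), hPidem]
    have h2 : ‖P t x‖ ^ 2 ≤ ‖x‖ * ‖P t x‖ := by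
      rw [← real_inner_self_eq_norm_sq, h1]
      exact real_inner_le_norm _ _
    nlinarith [norm_nonneg (P t x), norm_nonneg x]
  set u : ℝ → Euc n := fun t => P t (iteratedDeriv k α t) with hu_def
  set v : ℝ → Euc n := fun t => P t (iteratedDeriv (k+1) α t) with hv_def
  have hucont : Continuous u := hPcont.clm_apply (hDcont k)
  have hvcont : Continuous v := hPcont.clm_apply (hDcont (k+1))
  have hu0 : ∀ t, u t ≠ 0 := by
    intro t h0
    have h1 : P t (-(iteratedDeriv k α t)) = 0 := by
      rw [map_neg, neg_eq_zero]; exact h0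
    have h2 := hc t 1 0 (-(iteratedDeriv k α t)) h1 (by module)
    exact one_ne_zero h2.1
  have hcv : ∀ (t : ℝ) (c : ℝ), c • u t + v t ≠ 0 := by
    intro t c h0
    have h1 : P t (-(c • iteratedDeriv k α t + iteratedDeriv (k+1) α t)) = 0 := by
      rw [map_neg, map_add, map_smul, neg_eq_zero]
      exact h0
    have h2 := hc t c 1 (-(c • iteratedDeriv k α t + iteratedDeriv (k+1) α t)) h1 (by module)
    exact one_ne_zero h2.2.1
  have hIccne : (Set.Icc (0:ℝ) ℓ).Nonempty := Set.nonempty_Icc.mpr hℓ.le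
  -- global bound on the (k+2)-nd derivative
  obtain ⟨tC, htCmem, htC⟩ :=
    isCompact_Icc.exists_isMaxOn hIccne ((hDcont (k+2)).norm.continuousOn)
  set C : ℝ := ‖iteratedDeriv (k+2) α tC‖ with hC_def
  have hC0 : 0 ≤ C := norm_nonneg _
  have hC : ∀ y, ‖iteratedDeriv (k+2) α y‖ ≤ C := by
    intro y
    obtain ⟨q, hq⟩ := hrep y
    calc ‖iteratedDeriv (k+2) α y‖ = ‖iteratedDeriv (k+2) α (y - q*ℓ)‖ := by rw [hDZ]
      _ ≤ C := isMaxOn_iff.mp htC _ hq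
  -- uniform linear independence constant m
  obtain ⟨t1, ht1mem, ht1⟩ := isCompact_Icc.exists_isMinOn hIccne (hucont.norm.continuousOn)
  have hmu : 0 < ‖u t1‖ := norm_pos_iff.mpr (hu0 t1)
  obtain ⟨t2, ht2mem, ht2⟩ := isCompact_Icc.exists_isMaxOn hIccne (hvcont.norm.continuousOn)
  set B : ℝ := (‖v t2‖ + 1) / ‖u t1‖ with hB_def
  have hB0 : 0 ≤ B := by positivity
  have hKc : IsCompact ((Set.Icc (0:ℝ) ℓ) ×ˢ (Set.Icc (-B) B)) :=
    isCompact_Icc.prod isCompact_Icc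
  have hφc : Continuous fun p : ℝ × ℝ => ‖p.2 • u p.1 + v p.1‖ :=
    ((continuous_snd.smul (hucont.comp continuous_fst)).add (hvcont.comp continuous_fst)).norm
  obtain ⟨p1, hp1mem, hp1⟩ := hKc.exists_isMinOn
    ⟨(0, 0), Set.mem_prod.mpr ⟨⟨le_rfl, hℓ.le⟩, ⟨neg_nonpos.mpr hB0, hB0⟩⟩⟩ hφc.continuousOn
  set m : ℝ := min (‖p1.2 • u p1.1 + v p1.1‖) 1 with hm_def
  have hm : 0 < m := lt_min (norm_pos_iff.mpr (hcv _ _)) one_pos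
  have hmbound : ∀ t ∈ Set.Icc (0:ℝ) ℓ, ∀ c : ℝ, m ≤ ‖c • u t + v t‖ := by
    intro t ht c
    rcases le_or_gt |c| B with hcB | hcB
    · refine le_trans (min_le_left _ _)
        (isMinOn_iff.mp hp1 (t, c) (Set.mem_prod.mpr ⟨ht, ?_⟩))
      exact Set.mem_Icc.mpr (abs_le.mp hcB)
    · have h1 : ‖u t1‖ ≤ ‖u t‖ := isMinOn_iff.mp ht1 t ht
      have h2 : ‖v t‖ ≤ ‖v t2‖ := isMaxOn_iff.mp ht2 t ht
      have h3 : ‖c • u t‖ - ‖v t‖ ≤ ‖c • u t + v t‖ := by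
        have h4 := norm_sub_le (c • u t + v t) (v t)
        rw [add_sub_cancel_right] at h4
        linarith
      rw [norm_smul, Real.norm_eq_abs] at h3
      have h5 : B * ‖u t1‖ = ‖v t2‖ + 1 := div_mul_cancel₀ _ hmu.ne'
      have h6 : (1:ℝ) ≤ |c| * ‖u t‖ - ‖v t‖ := by
        nlinarith [mul_lt_mul_of_pos_right hcB hmu,
          mul_le_mul_of_nonneg_left h1 (abs_nonneg c)]
      linarith [min_le_right (‖p1.2 • u p1.1 + v p1.1‖) (1:ℝ)]
  have hmb2 : ∀ t ∈ Set.Icc (0:ℝ) ℓ, ∀ a b : ℝ, m * |b| ≤ ‖a • u t + b • v t‖ := by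
    intro t ht a b
    rcases eq_or_ne b 0 with rfl | hb
    · simp
    · have he : a • u t + b • v t = b • ((a/b) • u t + v t) := by
        rw [smul_add, smul_smul]
        congr 2
        field_simp
      rw [he, norm_smul, Real.norm_eq_abs]
      nlinarith [hmbound t ht (a/b), abs_nonneg b]
  set F : ℝ := ((k+1).factorial : ℝ) with hF_def
  have hF : 0 < F := by rw [hF_def]; exact_mod_cast Nat.factorial_pos _
  set ε : ℝ := min (ℓ/2) (m / (F * (C+1) * 2)) with hε_def
  have hε : 0 < ε := lt_min (by linarith) (by positivity)
  have hεℓ : ε ≤ ℓ/2 := min_le_left _ _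
  -- off-diagonal minimum
  set Koff : Set (ℝ × ℝ) :=
    (Set.Icc (0:ℝ) ℓ) ×ˢ (Set.Icc (-(ℓ/2)) (-ε) ∪ Set.Icc ε (ℓ/2)) with hKoff_def
  have hKoffc : IsCompact Koff := isCompact_Icc.prod (isCompact_Icc.union isCompact_Icc)
  have hGc : Continuous fun p : ℝ × ℝ => ‖P p.1 (α (p.1 + p.2) - α p.1)‖ :=
    ((hPcont.comp continuous_fst).clm_apply
      ((hαcont.comp (continuous_fst.add continuous_snd)).sub
        (hαcont.comp continuous_fst))).norm
  obtain ⟨p0, hp0mem, hp0⟩ := hKoffc.exists_isMinOn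
    ⟨(0, ε), Set.mem_prod.mpr ⟨⟨le_rfl, hℓ.le⟩, Or.inr ⟨le_rfl, hεℓ⟩⟩⟩ hGc.continuousOn
  set c0 : ℝ := ‖P p0.1 (α (p0.1 + p0.2) - α p0.1)‖ with hc0_def
  have hc0 : 0 < c0 := by
    apply norm_pos_iff.mpr
    apply hsep
    rintro ⟨q, hq⟩
    have hq2 : p0.2 = (q:ℝ) * ℓ := by linarith [hq]
    have hmem2 := (Set.mem_prod.mp hp0mem).2
    have habs : ε ≤ |p0.2| ∧ |p0.2| ≤ ℓ/2 := by
      rcases hmem2 with h | h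
      · obtain ⟨ha, hb'⟩ := Set.mem_Icc.mp h
        rw [abs_of_nonpos (by linarith)]
        constructor <;> linarith
      · obtain ⟨ha, hb'⟩ := Set.mem_Icc.mp h
        rw [abs_of_nonneg (by linarith)]
        exact ⟨ha, hb'⟩
    rcases eq_or_ne q 0 with rfl | hq0
    · rw [hq2] at habs
      simp only [Int.cast_zero, zero_mul, abs_zero] at habs
      linarith [habs.1]
    · have hq1 : (1:ℝ) ≤ |(q:ℝ)| := by exact_mod_cast Int.one_le_abs hq0
      have hq3 : ℓ ≤ |p0.2| := by
        rw [hq2, abs_mul, abs_of_pos hℓ]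
        nlinarith
      linarith [habs.2]
  -- bound on u
  obtain ⟨t3, ht3mem, ht3⟩ := isCompact_Icc.exists_isMaxOn hIccne (hucont.norm.continuousOn)
  have hM0 : 0 ≤ ‖u t3‖ := norm_nonneg _
  refine ⟨c0 / (‖u t3‖ + 1), by positivity, ?_⟩
  intro δ hδ0 hδ1 t s
  obtain ⟨q, hq⟩ := hrep t
  set r : ℤ := round ((s - t)/ℓ) with hr_def
  set h : ℝ := s - t - r * ℓ with hh_def
  have hhle : |h| ≤ ℓ/2 := by
    have h1 : |(s - t)/ℓ - (r:ℝ)| ≤ 1/2 := by rw [hr_def]; exact abs_sub_round _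
    have h2 : h = ℓ * ((s - t)/ℓ - (r:ℝ)) := by
      rw [hh_def]; field_simp
    rw [h2, abs_mul, abs_of_pos hℓ]
    nlinarith [abs_nonneg ((s-t)/ℓ - (r:ℝ))]
  set t₀ : ℝ := t - q * ℓ with ht₀_def
  have hPt : P t₀ = P t := hPZ q t
  have hαt : α t₀ = α t := hαZ q t
  have hDt : iteratedDeriv k α t₀ = iteratedDeriv k α t := hDZ k q t
  have hαs2 : α (t₀ + h) = α s := by
    have he : t₀ + h = s - ((q + r : ℤ) : ℝ) * ℓ := by
      rw [ht₀_def, hh_def]; push_cast; ring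
    rw [he]; exact hαZ (q+r) s
  rw [← hPt, ← hαt, ← hDt, ← hαs2]
  rcases eq_or_ne h 0 with hh0 | hh0
  · rw [hh0, add_zero]
    have he : α t₀ - (α t₀ + δ • iteratedDeriv k α t₀) = -(δ • iteratedDeriv k α t₀) := by
      abel
    rw [he, map_neg, map_smul, neg_ne_zero]
    exact smul_ne_zero hδ0.ne' (hu0 t₀)
  rcases le_or_gt |h| ε with hcase | hcase
  · -- near-diagonal case
    have hhpos : 0 < |h| := abs_pos.mpr hh0
    set S : Euc n := ∑ j ∈ Finset.range (k+2),
        ((h^j / (j.factorial : ℝ)) • iteratedDeriv j α t₀) with hS_def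
    have htay : ‖α (t₀ + h) - S‖ ≤ C * |h|^(k+2) := by
      rw [hS_def]; exact taylor_bound_aux (k+2) α hαsm hC t₀ h
    have hPS : P t₀ S = P t₀ (α t₀) + (h^k / (k.factorial : ℝ)) • u t₀
        + (h^(k+1) / F) • v t₀ := by
      rw [hS_def, map_sum]
      simp only [map_smul]
      rw [Finset.sum_range_succ, Finset.sum_range_succ]
      have hz : ∑ j ∈ Finset.range k, (h^j / (j.factorial : ℝ)) • P t₀ (iteratedDeriv j α t₀)
          = P t₀ (α t₀) := by
        obtain ⟨l, hl⟩ : ∃ l, k = l + 1 := ⟨k - 1, by omega⟩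
        rw [hl, Finset.sum_range_succ']
        have hzz : ∀ i ∈ Finset.range l,
            (h^(i+1) / ((i+1).factorial : ℝ)) • P t₀ (iteratedDeriv (i+1) α t₀) = 0 := by
          intro i hi
          have hi' := Finset.mem_range.mp hi
          rw [hb t₀ (i+1) (by omega) (by omega), smul_zero]
        rw [Finset.sum_congr rfl hzz, Finset.sum_const_zero, zero_add]
        norm_num [iteratedDeriv_zero]
      rw [hz]
    have hXeq : P t₀ (α (t₀+h) - (α t₀ + δ • iteratedDeriv k α t₀))
        = ((h^k / (k.factorial : ℝ) - δ) • u t₀ + (h^(k+1)/F) • v t₀)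
          + P t₀ (α (t₀+h) - S) := by
      have hfold : P t₀ (iteratedDeriv k α t₀) = u t₀ := rfl
      have e1 : P t₀ (α (t₀+h) - (α t₀ + δ • iteratedDeriv k α t₀))
          = P t₀ (α (t₀+h)) - (P t₀ (α t₀) + δ • u t₀) := by
        rw [map_sub, map_add, map_smul, hfold]
      have e2 : P t₀ (α (t₀+h) - S) = P t₀ (α (t₀+h)) - P t₀ S := map_sub _ _ _
      rw [e1, e2, hPS]
      module
    have hEb : ‖P t₀ (α (t₀+h) - S)‖ ≤ C * |h|^(k+2) := le_trans (hPle _ _) htay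
    have habs2 : |h^(k+1)/F| = |h|^(k+1)/F := by
      rw [abs_div, abs_pow, abs_of_pos hF]
    have hAb : m * (|h|^(k+1)/F)
        ≤ ‖(h^k / (k.factorial:ℝ) - δ) • u t₀ + (h^(k+1)/F) • v t₀‖ := by
      have hmm := hmb2 t₀ hq (h^k / (k.factorial:ℝ) - δ) (h^(k+1)/F)
      rwa [habs2] at hmm
    have hstrict : C * |h|^(k+2) < m * (|h|^(k+1)/F) := by
      have hp1' : (0:ℝ) < |h|^(k+1) := pow_pos hhpos _
      have hεle : ε ≤ m / (F * (C+1) * 2) := min_le_right _ _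
      have hkey : C * |h| < m / F := by
        have h1 : C * |h| ≤ C * ε := mul_le_mul_of_nonneg_left hcase hC0
        have h2 : C * ε ≤ (C+1) * (m / (F * (C+1) * 2)) :=
          mul_le_mul (by linarith) hεle hε.le (by linarith)
        have h3 : (C+1) * (m / (F * (C+1) * 2)) = m / (F * 2) := by
          field_simp
        have h4 : m / (F*2) < m / F := by
          rw [div_lt_div_iff₀ (by positivity) hF]
          nlinarith
        linarith
      calc C * |h|^(k+2) = (C * |h|) * |h|^(k+1) := by rw [pow_succ]; ring
        _ < (m / F) * |h|^(k+1) := mul_lt_mul_of_pos_right hkey hp1'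
        _ = m * (|h|^(k+1)/F) := by ring
    rw [hXeq]
    intro hcontra
    have h9 : ‖(h^k / (k.factorial:ℝ) - δ) • u t₀ + (h^(k+1)/F) • v t₀‖
        - ‖P t₀ (α (t₀+h) - S)‖
        ≤ ‖((h^k / (k.factorial:ℝ) - δ) • u t₀ + (h^(k+1)/F) • v t₀)
            + P t₀ (α (t₀+h) - S)‖ := by
      have h10 := norm_sub_norm_le
        ((h^k / (k.factorial:ℝ) - δ) • u t₀ + (h^(k+1)/F) • v t₀)
        (-(P t₀ (α (t₀+h) - S)))
      simpa only [sub_neg_eq_add, norm_neg] using h10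
    rw [hcontra, norm_zero] at h9
    linarith
  · -- off-diagonal case
    have hmem : (t₀, h) ∈ Koff := by
      rw [hKoff_def]
      refine Set.mem_prod.mpr ⟨hq, ?_⟩
      rcases abs_cases h with ⟨he, hpos⟩ | ⟨he, hneg⟩
      · right; rw [he] at hcase hhle; exact Set.mem_Icc.mpr ⟨hcase.le, hhle⟩
      · left; rw [he] at hcase hhle
        exact Set.mem_Icc.mpr ⟨by linarith, by linarith⟩
    have hGge : c0 ≤ ‖P t₀ (α (t₀ + h) - α t₀)‖ := isMinOn_iff.mp hp0 (t₀, h) hmem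
    have hXeq : P t₀ (α (t₀+h) - (α t₀ + δ • iteratedDeriv k α t₀))
        = P t₀ (α (t₀+h) - α t₀) - δ • u t₀ := by
      rw [show α (t₀+h) - (α t₀ + δ • iteratedDeriv k α t₀)
          = (α (t₀+h) - α t₀) - δ • iteratedDeriv k α t₀ from by abel,
        map_sub, map_smul]
    have hule : ‖u t₀‖ ≤ ‖u t3‖ := isMaxOn_iff.mp ht3 t₀ hq
    have hδM : δ * ‖u t3‖ < c0 := by
      have h11 : δ * (‖u t3‖ + 1) < c0 :=
        (lt_div_iff₀ (by linarith)).mp hδ1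
      nlinarith
    rw [hXeq]
    intro hcontra
    have h9 : ‖P t₀ (α (t₀+h) - α t₀)‖ - ‖δ • u t₀‖
        ≤ ‖P t₀ (α (t₀+h) - α t₀) - δ • u t₀‖ := norm_sub_norm_le _ _
    rw [hcontra, norm_zero, norm_smul, Real.norm_eq_abs, abs_of_pos hδ0] at h9
    nlinarith [mul_le_mul_of_nonneg_left hule hδ0.le]
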